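/- arXiv:2305.14818 — 2 statements merged into one kernel-verified Lean document; each statement's English description precedes it below -/
import Mathlib

section
/- Under the bipartisan construction with edge weights w(u, copy of ℓ) = storage cost C^s_ℓ · S + read cost ρ(u) · C^r_ℓ · S, a minimum-weight perfect matching of the left side yields a feasible tier assignment whose total cost equals the minimum total cost over all feasible tier assignments. -/
/-! Injective maps into the slots `Σ ℓ, Fin (Z ℓ)` are exactly the lifts of tier
assignments that respect the capacities: forgetting the slot of an injective map gives
at most `Z ℓ` partitions per tier, and conversely the partitions of a tier can be put
into distinct slots of it. Edge weights depend only on the tier, so a lift has the same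
cost as the assignment it lifts, and the minimum over matchings is the minimum over
feasible assignments. -/

open Finset

section SigmaSlots

variable {U ι : Type*} {β : ι → Type*} [Fintype U] [DecidableEq ι]

theorem card_filter_fst_eq_le_of_injective [∀ i, Fintype (β i)]
    {g : U → Σ i, β i} (hg : Function.Injective g) (i : ι) :
    #{u | (g u).1 = i} ≤ Fintype.card (β i) := by
  calc #{u | (g u).1 = i}
      ≤ #((univ : Finset (β i)).map (Function.Embedding.sigmaMk i)) := by
        refine card_le_card_of_injOn g (fun u hu => ?_) hg.injOn
        rcases hgu : g u with ⟨j, b⟩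
        obtain rfl : j = i := by simpa [hgu] using hu
        exact mem_map.2 ⟨b, mem_univ b, rfl⟩
    _ = Fintype.card (β i) := by simp

theorem exists_injective_sigma_lift [∀ i, Fintype (β i)] (f : U → ι)
    (hf : ∀ i, #{u | f u = i} ≤ Fintype.card (β i)) :
    ∃ g : U → Σ i, β i, Function.Injective g ∧ ∀ u, (g u).1 = f u := by
  have slots : ∀ i, Nonempty ({u // f u = i} ↪ β i) := fun i => by
    rw [Function.Embedding.nonempty_iff_card_le, Fintype.card_subtype]
    exact hf i
  let e i := (slots i).some
  refine ⟨Sigma.map id (fun i => e i) ∘ (Equiv.sigmaFiberEquiv f).symm, ?_, fun _ => rfl⟩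
  exact (Function.injective_id.sigma_map fun i => (e i).injective).comp
    (Equiv.sigmaFiberEquiv f).symm.injective

end SigmaSlots

theorem min_matching_gives_optimal_assignment_general {U τ : Type*} [Fintype U]
    [DecidableEq τ] (Z : τ → ℕ) (B : τ → ℝ) (T : U → ℝ)
    (Cs Cr : τ → ℝ) (ρ : U → ℝ) (S : ℝ)
    (g : U → (Σ ℓ : τ, Fin (Z ℓ)))
    (hginj : Function.Injective g)
    (hglat : ∀ u, B (g u).1 ≤ T u)
    (hgmin : ∀ g' : U → (Σ ℓ : τ, Fin (Z ℓ)), Function.Injective g' →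
      (∀ u, B (g' u).1 ≤ T u) →
      ∑ u, (Cs (g u).1 + ρ u * Cr (g u).1) * S ≤
        ∑ u, (Cs (g' u).1 + ρ u * Cr (g' u).1) * S) :
    ((∀ u, B (g u).1 ≤ T u) ∧
      (∀ ℓ, (Finset.univ.filter fun u => (g u).1 = ℓ).card ≤ Z ℓ)) ∧
    ∀ f : U → τ, (∀ u, B (f u) ≤ T u) →
      (∀ ℓ, (Finset.univ.filter fun u => f u = ℓ).card ≤ Z ℓ) →
      ∑ u, (Cs (g u).1 + ρ u * Cr (g u).1) * S ≤
        ∑ u, (Cs (f u) + ρ u * Cr (f u)) * S := by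
  refine ⟨⟨hglat, fun ℓ => ?_⟩, fun f hflat hfcap => ?_⟩
  · simpa using card_filter_fst_eq_le_of_injective hginj ℓ
  · obtain ⟨g', hg'inj, hg'fst⟩ :=
      exists_injective_sigma_lift (β := fun ℓ => Fin (Z ℓ)) f (by simpa using hfcap)
    simpa only [hg'fst] using hgmin g' hg'inj (fun u => hg'fst u ▸ hflat u)

/-- A minimum-weight perfect matching of the left side of the bipartite graph
(with edge weights `C^s_ℓ·S + ρ(u)·C^r_ℓ·S`) yields a feasible tier assignment
whose total cost equals the minimum cost over all feasible tier assignments. -/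
theorem min_matching_gives_optimal_assignment {U τ : Type*} [Fintype U]
    [Fintype τ] [DecidableEq τ] (Z : τ → ℕ) (B : τ → ℝ) (T : U → ℝ)
    (Cs Cr : τ → ℝ) (ρ : U → ℝ) (S : ℝ)
    (g : U → (Σ ℓ : τ, Fin (Z ℓ)))
    (hginj : Function.Injective g)
    (hglat : ∀ u, B (g u).1 ≤ T u)
    (hgmin : ∀ g' : U → (Σ ℓ : τ, Fin (Z ℓ)), Function.Injective g' →
      (∀ u, B (g' u).1 ≤ T u) →
      ∑ u, (Cs (g u).1 + ρ u * Cr (g u).1) * S ≤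
        ∑ u, (Cs (g' u).1 + ρ u * Cr (g' u).1) * S) :
    ((∀ u, B (g u).1 ≤ T u) ∧
      (∀ ℓ, (Finset.univ.filter fun u => (g u).1 = ℓ).card ≤ Z ℓ)) ∧
    ∀ f : U → τ, (∀ u, B (f u) ≤ T u) →
      (∀ ℓ, (Finset.univ.filter fun u => f u = ℓ).card ≤ Z ℓ) →
      ∑ u, (Cs (g u).1 + ρ u * Cr (g u).1) * S ≤
        ∑ u, (Cs (f u) + ρ u * Cr (f u)) * S :=
  min_matching_gives_optimal_assignment_general Z B T Cs Cr ρ S g hginj hglat hgmin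
end

section
/- Under the ε-rounding of interval costs, if the optimal solution with true budget C_OPT has span S_OPT, then the optimal solution of the rounded problem with budget C_OPT + Nε has span at most S_OPT, and any optimal rounded solution has true cost at most (1 + Nε/C_OPT)·C_OPT = C_OPT + Nε. In particular, taking ε = C_OPT/N gives a solution with span ≤ S_OPT and cost ≤ 2·C_OPT. -/
/-- Bi-criteria guarantee behind Theorem 5: if the optimum with true budget
`C_OPT` has span `S_OPT`, then an optimal solution of the `ε`-rounded problem
with budget `C_OPT + N·ε` has span at most `S_OPT` and true cost at most
`C_OPT + N·ε`. -/
theorem rounded_bicriteria {α : Type*} (Sols : Set (Finset α)) (N : ℕ)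
    (Sp C Ct : α → ℝ) (ε COPT SOPT : ℝ) (hε : 0 < ε)
    (hcard : ∀ Z ∈ Sols, Z.card ≤ N)
    (hSp : ∀ m, 0 ≤ Sp m) (hC : ∀ m, 0 ≤ C m)
    (hround : ∀ m, C m ≤ Ct m ∧ Ct m ≤ C m + ε)
    (Zopt : Finset α) (hZopt : Zopt ∈ Sols)
    (hZoptCost : ∑ m ∈ Zopt, C m ≤ COPT)
    (hZoptSpan : ∑ m ∈ Zopt, Sp m = SOPT)
    (hOpt : ∀ Z ∈ Sols, (∑ m ∈ Z, C m ≤ COPT) → SOPT ≤ ∑ m ∈ Z, Sp m)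
    (Zstar : Finset α) (hZstar : Zstar ∈ Sols)
    (hZstarFeas : ∑ m ∈ Zstar, Ct m ≤ COPT + N * ε)
    (hZstarOpt : ∀ Z ∈ Sols, (∑ m ∈ Z, Ct m ≤ COPT + N * ε) →
      ∑ m ∈ Zstar, Sp m ≤ ∑ m ∈ Z, Sp m) :
    (∑ m ∈ Zstar, Sp m ≤ SOPT) ∧ (∑ m ∈ Zstar, C m ≤ COPT + N * ε) := by
  constructor
  · have hfeas : ∑ m ∈ Zopt, Ct m ≤ COPT + N * ε := by
      calc ∑ m ∈ Zopt, Ct m ≤ ∑ m ∈ Zopt, (C m + ε) :=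
            Finset.sum_le_sum fun m _ => (hround m).2
        _ = ∑ m ∈ Zopt, C m + Zopt.card * ε := by
            rw [Finset.sum_add_distrib, Finset.sum_const, nsmul_eq_mul]
        _ ≤ COPT + N * ε := by
            have := hcard Zopt hZopt
            have : (Zopt.card : ℝ) ≤ N := by exact_mod_cast this
            nlinarith
    calc ∑ m ∈ Zstar, Sp m ≤ ∑ m ∈ Zopt, Sp m := hZstarOpt Zopt hZopt hfeas
      _ = SOPT := hZoptSpan
  · calc ∑ m ∈ Zstar, C m ≤ ∑ m ∈ Zstar, Ct m :=
        Finset.sum_le_sum fun m _ => (hround m).1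
      _ ≤ COPT + N * ε := hZstarFeas
end
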